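/- Let N ≥ 1 be an integer, h > 0, α ≥ 0 and Δt ≥ 0, and let F_OE denote the OE operator that maps N-periodic data (ū_j, v̄_j)_{j∈ℤ} to (ū^σ_i, v̄^σ_i)_{i∈ℤ} as defined in the context. Then F_OE is scale-invariant: for every λ ≠ 0 and every c ∈ ℝ, applying F_OE to the transformed data (λū_j + c, λv̄_j)_{j∈ℤ} yields exactly (λū^σ_i + c, λv̄^σ_i)_{i∈ℤ}; that is, F_OE commutes with the affine transformation A_{λ,c}(ū, v̄) = (λū + c, λv̄). -/

import Mathlib

/-- The jump functional `J0_{i+1/2}` of the reconstructed values across the interface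
`x_{i+1/2}` (formula (eq:jump1) of the paper). -/
noncomputable def J0 (ub vb : ℤ → ℝ) (i : ℤ) : ℝ :=
  (-13 * ub (i - 1) - 31 * ub i + 31 * ub (i + 1) + 13 * ub (i + 2)
    - 50 * vb (i - 1) - 370 * vb i - 370 * vb (i + 1) - 50 * vb (i + 2)) / 108

/-- The jump functional `J1_{i+1/2}` of the derivative of the reconstruction across the
interface `x_{i+1/2}`. -/
noncomputable def J1 (h : ℝ) (ub vb : ℤ → ℝ) (i : ℤ) : ℝ :=
  (-5 * ub (i - 1) + 5 * ub i + 5 * ub (i + 1) - 5 * ub (i + 2)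
    - 22 * vb (i - 1) - 54 * vb i + 54 * vb (i + 1) + 22 * vb (i + 2)) / (36 * h)

/-- The global average `ū_Ω = (1/N) Σ_{j=1}^N ū_j` of the cell averages. -/
noncomputable def uOmega (N : ℕ) (ub : ℤ → ℝ) : ℝ :=
  (1 / (N : ℝ)) * ∑ j ∈ Finset.Icc (1 : ℤ) (N : ℤ), ub j

/-- The global deviation `M = max_{1 ≤ j ≤ N} |ū_j - ū_Ω|`. -/
noncomputable def Mmax (N : ℕ) (hN : 1 ≤ N) (ub : ℤ → ℝ) : ℝ :=
  (Finset.Icc (1 : ℤ) (N : ℤ)).sup'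
    (Finset.nonempty_Icc.mpr (by exact_mod_cast hN))
    (fun j => |ub j - uOmega N ub|)

/-- The scale-invariant damping coefficient `σ̂_i` of the OE procedure
(formula (sec3:sigma_1d) of the paper). -/
noncomputable def sigmaHat (N : ℕ) (hN : 1 ≤ N) (h : ℝ) (ub vb : ℤ → ℝ) (i : ℤ) : ℝ :=
  if Mmax N hN ub = 0 then 0
  else (|J0 ub vb (i - 1)| + |J0 ub vb i|
    + h * |J1 h ub vb (i - 1)| + h * |J1 h ub vb i|) / Mmax N hN ub

/-- The zeroth-order moment after the OE procedure: the cell average is unchanged. -/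
noncomputable def uSigma (ub : ℤ → ℝ) (i : ℤ) : ℝ := ub i

/-- The first-order moment after the OE procedure:
`v̄^σ_i = v̄_i · exp(-(αΔt/h)·σ̂_i)` (Theorem 2.1 of the paper). -/
noncomputable def vSigma (N : ℕ) (hN : 1 ≤ N) (h α Δt : ℝ) (ub vb : ℤ → ℝ) (i : ℤ) : ℝ :=
  vb i * Real.exp (-(α * Δt / h) * sigmaHat N hN h ub vb i)

lemma uOmega_scale (N : ℕ) (hN : 1 ≤ N) (ub : ℤ → ℝ) (lam c : ℝ) :
    uOmega N (fun j => lam * ub j + c) = lam * uOmega N ub + c := by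
  have hcard : ((Finset.Icc (1 : ℤ) (N : ℤ)).card : ℝ) = (N : ℝ) := by
    rw [Int.card_Icc]
    simp
  have hNne : (N : ℝ) ≠ 0 := by positivity
  unfold uOmega
  rw [Finset.sum_add_distrib, Finset.sum_const, ← Finset.mul_sum]
  push_cast [hcard]
  simp only [nsmul_eq_mul, hcard]
  field_simp

lemma Mmax_scale (N : ℕ) (hN : 1 ≤ N) (ub : ℤ → ℝ) (lam c : ℝ) :
    Mmax N hN (fun j => lam * ub j + c) = |lam| * Mmax N hN ub := by
  unfold Mmax
  rw [uOmega_scale N hN ub lam c]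
  rw [Finset.comp_sup'_eq_sup'_comp _ (fun x => |lam| * x)
    (fun x y => mul_max_of_nonneg x y (abs_nonneg lam))]
  apply Finset.sup'_congr _ rfl
  intro j _
  simp only [Function.comp_apply, ← abs_mul]
  congr 1
  ring

lemma J0_scale (ub vb : ℤ → ℝ) (lam c : ℝ) (i : ℤ) :
    J0 (fun j => lam * ub j + c) (fun j => lam * vb j) i = lam * J0 ub vb i := by
  unfold J0; ring

lemma J1_scale (h : ℝ) (ub vb : ℤ → ℝ) (lam c : ℝ) (i : ℤ) :
    J1 h (fun j => lam * ub j + c) (fun j => lam * vb j) i = lam * J1 h ub vb i := by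
  unfold J1; ring

lemma sigmaHat_scale (N : ℕ) (hN : 1 ≤ N) (h : ℝ) (ub vb : ℤ → ℝ) (lam c : ℝ)
    (hlam : lam ≠ 0) (i : ℤ) :
    sigmaHat N hN h (fun j => lam * ub j + c) (fun j => lam * vb j) i
      = sigmaHat N hN h ub vb i := by
  unfold sigmaHat
  rw [Mmax_scale N hN ub lam c, J0_scale, J0_scale, J1_scale, J1_scale]
  have hl : |lam| ≠ 0 := abs_ne_zero.mpr hlam
  by_cases hM : Mmax N hN ub = 0
  · simp [hM]
  · rw [if_neg (by simp [hl, hM]), if_neg hM]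
    rw [abs_mul, abs_mul, abs_mul, abs_mul]
    field_simp

/-- **Theorem 2.4 of the paper (scale invariance of the OE operator)**: the OE operator
`F_OE : (ū_j, v̄_j) ↦ (ū^σ_i, v̄^σ_i)` commutes with every affine transformation
`A_{λ,c}(ū, v̄) = (λū + c, λv̄)` with `λ ≠ 0`: applying the OE procedure to the
transformed data yields exactly `(λū^σ_i + c, λv̄^σ_i)`. -/
theorem oe_operator_scale_invariant
    (N : ℕ) (hN : 1 ≤ N) (h α Δt : ℝ)
    (hh : 0 < h) (hα : 0 ≤ α) (hΔt : 0 ≤ Δt)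
    (ub vb : ℤ → ℝ)
    (hper : ∀ j : ℤ, ub (j + N) = ub j ∧ vb (j + N) = vb j) :
    ∀ (lam c : ℝ), lam ≠ 0 → ∀ i : ℤ,
      uSigma (fun j => lam * ub j + c) i = lam * uSigma ub i + c ∧
      vSigma N hN h α Δt (fun j => lam * ub j + c) (fun j => lam * vb j) i =
        lam * vSigma N hN h α Δt ub vb i := by
  intro lam c hlam i
  constructor
  · rfl
  · unfold vSigma
    rw [sigmaHat_scale N hN h ub vb lam c hlam i]
    ring
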